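/- arXiv:1907.12702 — 4 statements merged into one kernel-verified Lean document; each statement's English description precedes it below -/
import Mathlib

section
/- For ω ∈ ℝ with ω ≠ 0, N a positive integer, h = 1/N with ωh ∉ ℤ, the optimal coefficients C_0 = h(1 + 2πiωh − e^{2πiωh})/(2πωh)², C_β = h·2(1 − cos 2πωh)/(2πωh)²·e^{2πiωhβ} for 1 ≤ β ≤ N−1, and C_N = h(1 − 2πiωh − e^{−2πiωh})/(2πωh)²·e^{2πiω} satisfy ∑_{β=0}^{N} C_β = (e^{2πiω} − 1)/(2πiω) = ∫_0^1 e^{2πiωx} dx. -/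
open Real Complex

noncomputable def Copt (ω : ℝ) (N : ℕ) (β : ℕ) : ℂ :=
  let h : ℝ := 1 / N
  if β = 0 then
    (h : ℂ) * (1 + 2 * π * I * ω * h - Complex.exp (2 * π * I * ω * h)) / (2 * π * ω * h) ^ 2
  else if β = N then
    (h : ℂ) * (1 - 2 * π * I * ω * h - Complex.exp (-(2 * π * I * ω * h))) / (2 * π * ω * h) ^ 2
      * Complex.exp (2 * π * I * ω)
  else
    (h : ℂ) * (2 * (1 - Real.cos (2 * π * ω * h))) / (2 * π * ω * h) ^ 2
      * Complex.exp (2 * π * I * ω * h * β)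

lemma sum_aux (H a E : ℂ) (M : ℕ) (hE0 : E ≠ 0) (hE1 : E - 1 ≠ 0) :
    H * (2 - E - E⁻¹) * E * ((E ^ M - 1) / (E - 1))
      + H * (1 + a - E)
      + H * (1 - a - E⁻¹) * E ^ (M + 1)
    = H * a * (1 - E ^ (M + 1)) := by
  have h2 : E ^ (M + 1) = E ^ M * E := pow_succ E M
  rw [h2]
  field_simp
  ring

theorem stmt2 (ω : ℝ) (hω : ω ≠ 0) (N : ℕ) (hN : 1 ≤ N)
    (hirr : ∀ k : ℤ, ω * (1 / N) ≠ k) :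
    (∑ β ∈ Finset.range (N + 1), Copt ω N β)
      = (Complex.exp (2 * π * I * ω) - 1) / (2 * π * I * ω) ∧
    (∑ β ∈ Finset.range (N + 1), Copt ω N β)
      = ∫ x in (0:ℝ)..1, Complex.exp (2 * π * I * ω * x) := by
  have hc : (2 * (π:ℂ) * I * ω) ≠ 0 := by
    simp [Real.pi_ne_zero, hω, Complex.I_ne_zero, Complex.ofReal_ne_zero]
  have hint : (∫ x in (0:ℝ)..1, Complex.exp (2 * π * I * ω * x))
      = (Complex.exp (2 * π * I * ω) - 1) / (2 * π * I * ω) := by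
    rw [integral_exp_mul_complex hc]
    simp
  obtain ⟨M, rfl⟩ : ∃ M, N = M + 1 := ⟨N - 1, by omega⟩
  set h : ℝ := 1 / ((M + 1 : ℕ) : ℝ) with hh
  have hM1 : ((M:ℝ) + 1) ≠ 0 := by positivity
  have hhne : h ≠ 0 := by
    rw [hh]; push_cast; simp [hM1]
  have h2piI : (2 * (π:ℂ) * I) ≠ 0 := by
    simp [Real.pi_ne_zero, Complex.I_ne_zero]
  set E : ℂ := Complex.exp (2 * π * I * ω * h) with hE
  have hE0 : E ≠ 0 := Complex.exp_ne_zero _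
  have hE1 : E ≠ 1 := by
    intro hcon
    rw [hE, Complex.exp_eq_one_iff] at hcon
    obtain ⟨n, hn⟩ := hcon
    apply hirr n
    have h2 : (2 * (π:ℂ) * I) * ((ω : ℂ) * (h : ℂ)) = (2 * (π:ℂ) * I) * (n : ℂ) := by
      linear_combination hn
    have h3 := mul_left_cancel₀ h2piI h2
    exact_mod_cast h3
  have main : ∑ β ∈ Finset.range (M + 1 + 1), Copt ω (M + 1) β
      = (Complex.exp (2 * π * I * ω) - 1) / (2 * π * I * ω) := by
    rw [Finset.sum_range_succ, Finset.sum_range_succ']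
    have hθ2 : ((2:ℂ) * (π:ℂ) * (ω:ℂ) * (h:ℂ)) ^ 2 ≠ 0 := by
      apply pow_ne_zero
      simp [Real.pi_ne_zero, hω, hhne, Complex.ofReal_ne_zero]
    have hM1c : ((M:ℂ) + 1) ≠ 0 := Nat.cast_add_one_ne_zero M
    have hcos : ((Real.cos (2 * π * ω * h) : ℝ) : ℂ) = (E + E⁻¹) / 2 := by
      have e1 : E = Complex.exp (((2 * π * ω * h : ℝ) : ℂ) * I) := by
        rw [hE]; congr 1; push_cast; ring
      have e2 : E⁻¹ = Complex.exp ((-((2 * π * ω * h : ℝ) : ℂ)) * I) := by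
        rw [e1, ← Complex.exp_neg]; congr 1; ring
      rw [e2, e1, Complex.exp_mul_I, Complex.exp_mul_I, Complex.cos_neg, Complex.sin_neg,
        Complex.ofReal_cos]
      ring
    have hNh : (((M + 1 : ℕ) : ℂ)) * (h : ℂ) = 1 := by
      rw [hh]; push_cast; field_simp
    have hF : Complex.exp (2 * π * I * ω) = E ^ (M + 1) := by
      rw [hE, ← Complex.exp_nat_mul]
      congr 1
      push_cast at hNh ⊢
      linear_combination (-(2 * (π:ℂ) * I * ω)) * hNh
    have c0 : Copt ω (M+1) 0 = (h:ℂ) * (1 + 2 * π * I * ω * h - E)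
        / (2 * (π:ℂ) * ω * h) ^ 2 := by
      simp only [Copt, hE, hh]
      norm_num
    have cN : Copt ω (M+1) (M+1) = (h:ℂ) * (1 - 2 * π * I * ω * h - E⁻¹)
        / (2 * (π:ℂ) * ω * h) ^ 2 * E ^ (M + 1) := by
      simp only [Copt, hE, hh, ← Complex.exp_neg, ← hF]
      norm_num
      left; rw [hF, hE, hh]; congr 2; push_cast; ring
    have cmid : ∀ x ∈ Finset.range M, Copt ω (M+1) (x+1)
        = ((h:ℂ) * (2 - E - E⁻¹) / (2 * (π:ℂ) * ω * h) ^ 2 * E) * E ^ x := by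
      intro x hx
      have hx' : x < M := Finset.mem_range.mp hx
      have hne0 : x + 1 ≠ 0 := by omega
      have hneN : x + 1 ≠ M + 1 := by omega
      simp only [Copt, hE, hh, if_neg hne0, if_neg hneN]
      rw [← hh, ← hE]
      rw [show (2 * (π:ℂ) * I * ω * h * ((x+1 : ℕ) : ℂ)) = ((x+1 : ℕ) : ℂ) * (2 * π * I * ω * h) by ring,
        Complex.exp_nat_mul, ← hE, hcos]
      rw [pow_succ]
      ring
    rw [Finset.sum_congr rfl cmid, ← Finset.mul_sum, geom_sum_eq hE1, c0, cN, hF]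
    have aux := sum_aux (h:ℂ) (2 * (π:ℂ) * I * ω * h) E M hE0 (sub_ne_zero.mpr hE1)
    have hDinv : ((2 * (π:ℂ) * ω * h) ^ 2)⁻¹ * (2 * (π:ℂ) * ω * h) ^ 2 = 1 :=
      inv_mul_cancel₀ hθ2
    rw [eq_div_iff hc]
    linear_combination (2 * (π:ℂ) * I * ω * ((2 * (π:ℂ) * ω * h) ^ 2)⁻¹) * aux
      + ((h:ℂ) ^ 2 * (2 * (π:ℂ) * ω) ^ 2 * (1 - E ^ (M + 1)) * ((2 * (π:ℂ) * ω * h) ^ 2)⁻¹) * Complex.I_sq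
      + (E ^ (M + 1) - 1) * hDinv
  exact ⟨main, main.trans hint.symm⟩
end

section
/- For ω ∈ ℝ with ω ≠ 0, N ≥ 1, h = 1/N, the optimal coefficients C_0 = h(1 + 2πiωh − e^{2πiωh})/(2πωh)², C_β = h·2(1 − cos 2πωh)/(2πωh)²·e^{2πiωhβ} for 1 ≤ β ≤ N−1, and C_N = h(1 − 2πiωh − e^{−2πiωh})/(2πωh)²·e^{2πiω} satisfy ∑_{β=0}^{N} C_β·(hβ) = e^{2πiω}/(2πiω) − (e^{2πiω} − 1)/(2πiω)², which equals ∫_0^1 e^{2πiωx}·x dx. -/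
open Real Complex

lemma Copt_mid (ω : ℝ) (N β : ℕ) (h1 : β ≠ 0) (h2 : β ≠ N) :
    Copt ω N β = ((1/N : ℝ) : ℂ) * (2 * (1 - Real.cos (2 * π * ω * (1/N : ℝ))))
      / (2 * π * ω * (1/N : ℝ)) ^ 2 * Complex.exp (2 * π * I * ω * (1/N : ℝ) * β) := by
  simp [Copt, h1, h2]

lemma Copt_last (ω : ℝ) (N : ℕ) (hN : N ≠ 0) :
    Copt ω N N = ((1/N : ℝ) : ℂ) * (1 - 2 * π * I * ω * (1/N : ℝ)
        - Complex.exp (-(2 * π * I * ω * (1/N : ℝ)))) / (2 * π * ω * (1/N : ℝ)) ^ 2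
      * Complex.exp (2 * π * I * ω) := by
  simp [Copt, hN]

lemma geom_key (x : ℂ) : ∀ n : ℕ, (x - 1)^2 * ∑ β ∈ Finset.range n, (β:ℂ) * x^β
    = ((n:ℂ) - 1) * x^(n+1) - (n:ℂ) * x^n + x := by
  intro n
  induction n with
  | zero => simp
  | succ n ih =>
    rw [Finset.sum_range_succ, mul_add, ih]
    push_cast
    ring

lemma integral_key (Z : ℂ) (hZ : Z ≠ 0) :
    (∫ x in (0:ℝ)..1, Complex.exp (Z * x) * x)
      = Complex.exp Z / Z - (Complex.exp Z - 1) / Z ^ 2 := by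
  have hderiv : ∀ t : ℝ, HasDerivAt (fun x : ℝ => Complex.exp (Z * x) * ((x:ℂ) / Z - 1 / Z^2))
      (Complex.exp (Z * t) * t) t := by
    intro t
    have h1 : HasDerivAt (fun x : ℝ => Complex.exp (Z * x)) (Z * Complex.exp (Z * t)) t := by
      have := (((Complex.hasDerivAt_exp (Z * t)).comp _
        (((hasDerivAt_id ((t:ℝ):ℂ)).const_mul Z)))).comp_ofReal
      simpa [mul_comm] using this
    have h2 : HasDerivAt (fun x : ℝ => ((x:ℂ) / Z - 1 / Z^2)) (1 / Z) t := by
      have := (((hasDerivAt_id ((t:ℝ):ℂ)).div_const Z).sub_const (1 / Z^2)).comp_ofReal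
      simpa using this
    have := h1.mul h2
    refine this.congr_deriv ?_
    field_simp
    ring
  rw [intervalIntegral.integral_eq_sub_of_hasDerivAt (fun t _ => hderiv t)]
  · push_cast
    field_simp
    simp only [mul_zero, Complex.exp_zero]
    ring
  · apply Continuous.intervalIntegrable
    continuity

theorem stmt3 (ω : ℝ) (hω : ω ≠ 0) (N : ℕ) (hN : 1 ≤ N) :
    (∑ β ∈ Finset.range (N + 1), Copt ω N β * ((1 / N : ℝ) * β : ℝ))
      = Complex.exp (2 * π * I * ω) / (2 * π * I * ω)
        - (Complex.exp (2 * π * I * ω) - 1) / (2 * π * I * ω) ^ 2 ∧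
    (∑ β ∈ Finset.range (N + 1), Copt ω N β * ((1 / N : ℝ) * β : ℝ))
      = ∫ x in (0:ℝ)..1, Complex.exp (2 * π * I * ω * x) * x := by
  have hZ0' : (2 * (π:ℂ) * I * (ω:ℂ)) ≠ 0 := by
    refine mul_ne_zero (mul_ne_zero (mul_ne_zero two_ne_zero ?_) I_ne_zero) ?_
    · exact_mod_cast Complex.ofReal_ne_zero.mpr Real.pi_ne_zero
    · exact_mod_cast Complex.ofReal_ne_zero.mpr hω
  have h1 : (∑ β ∈ Finset.range (N + 1), Copt ω N β * ((1 / N : ℝ) * β : ℝ))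
      = Complex.exp (2 * π * I * ω) / (2 * π * I * ω)
        - (Complex.exp (2 * π * I * ω) - 1) / (2 * π * I * ω) ^ 2 := by

    have hN0 : N ≠ 0 := by omega
    have hNr : (N:ℝ) ≠ 0 := Nat.cast_ne_zero.mpr hN0
    set hr : ℝ := 1 / N with hhr
    have hh0 : hr ≠ 0 := by simp [hhr, hNr]
    set θ : ℝ := 2 * π * ω * hr with hθdef
    have hθ0 : θ ≠ 0 := by
      simp only [hθdef]
      exact mul_ne_zero (mul_ne_zero (mul_ne_zero two_ne_zero Real.pi_ne_zero) hω) hh0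
    set z : ℂ := 2 * (π:ℂ) * I * ω * hr with hzdef
    set Z : ℂ := 2 * (π:ℂ) * I * ω with hZdef
    set q : ℂ := Complex.exp z with hqdef
    set Q : ℂ := Complex.exp Z with hQdef
    have hq0 : q ≠ 0 := Complex.exp_ne_zero z
    have hZ0 : Z ≠ 0 := by
      simp only [hZdef]
      refine mul_ne_zero (mul_ne_zero (mul_ne_zero two_ne_zero ?_) I_ne_zero) ?_
      · exact_mod_cast Complex.ofReal_ne_zero.mpr Real.pi_ne_zero
      · exact_mod_cast Complex.ofReal_ne_zero.mpr hω
    have hzθ : z = (θ:ℂ) * I := by push_cast [hzdef, hθdef]; ring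
    have hNc : (N:ℂ) ≠ 0 := Nat.cast_ne_zero.mpr hN0
    have hNh : ((hr:ℝ):ℂ) * (N:ℂ) = 1 := by
      push_cast [hhr]; field_simp
    have hqN : q ^ N = Q := by
      rw [hqdef, ← Complex.exp_nat_mul, hQdef]
      congr 1
      rw [hzdef]
      push_cast [hhr]
      field_simp
    have hθZ : ((θ:ℝ):ℂ)^2 = -(Z * hr)^2 := by
      push_cast [hθdef, hZdef]
      ring_nf
      simp [Complex.I_sq]
    have hcos : ((2 * (1 - Real.cos θ) : ℝ) : ℂ) * q = -(q-1)^2 := by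
      push_cast
      have h2c := Complex.two_cos (θ:ℂ)
      have hexp : Complex.exp ((θ:ℂ) * I) = q := by rw [hqdef, hzθ]
      have hexp' : Complex.exp (-(θ:ℂ) * I) = q⁻¹ := by
        rw [show (-(θ:ℂ) * I) = -((θ:ℂ)*I) by ring, Complex.exp_neg, hexp]
      rw [hexp, hexp'] at h2c
      have : Complex.cos (θ:ℂ) = (q + q⁻¹)/2 := by linear_combination h2c / 2
      rw [this]
      field_simp
      ring
    have hmid : ∀ β ∈ Finset.range N, Copt ω N β * ((hr * β : ℝ):ℂ)
        = (hr:ℂ) * (2 * (1 - Real.cos θ)) / ((θ:ℂ))^2 * ((hr:ℂ) * ((β:ℂ) * q^β)) := by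
      intro β hβ
      rcases eq_or_ne β 0 with rfl | hβ0
      · simp
      · have hβN : β ≠ N := Nat.ne_of_lt (Finset.mem_range.mp hβ)
        rw [Copt_mid ω N β hβ0 hβN]
        have hexpβ : Complex.exp (2 * π * I * ω * ((1/N : ℝ):ℂ) * β) = q ^ β := by
          rw [hqdef, ← Complex.exp_nat_mul]
          congr 1
          rw [hzdef, hZdef, hhr]
          push_cast
          ring
        rw [hexpβ]
        rw [hθdef, hhr]
        push_cast
        ring
    rw [Finset.sum_range_succ, Finset.sum_congr rfl hmid, Copt_last ω N hN0]
    have hfac : ∑ β ∈ Finset.range N, (hr:ℂ) * (2 * (1 - Real.cos θ)) / ((θ:ℂ))^2 * ((hr:ℂ) * ((β:ℂ) * q^β))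
        = (hr:ℂ) * (2 * (1 - Real.cos θ)) / ((θ:ℂ))^2 * (hr:ℂ) * ∑ β ∈ Finset.range N, (β:ℂ) * q^β := by
      rw [Finset.mul_sum]
      exact Finset.sum_congr rfl fun β _ => by ring
    rw [hfac]
    set S : ℂ := ∑ β ∈ Finset.range N, (β:ℂ) * q^β with hSdef
    rw [← hhr, ← hzdef, Complex.exp_neg, ← hqdef, ← hZdef, ← hQdef,
      show ((hr*(N:ℝ):ℝ):ℂ) = 1 from by push_cast; exact hNh]
    push_cast at hcos
    have hc2 : (2 * (1 - ((Real.cos θ :ℝ):ℂ))) = -(q-1)^2 * q⁻¹ := by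
      field_simp
      rw [Complex.ofReal_cos]
      linear_combination hcos
    rw [hc2]
    have hg := geom_key q N
    rw [← hSdef, pow_succ q N, hqN] at hg
    have hterm : (hr:ℂ) * (-(q-1)^2*q⁻¹) / ((θ:ℝ):ℂ)^2 * (hr:ℂ) * S
        = -(q⁻¹ * (hr:ℂ)^2 / ((θ:ℝ):ℂ)^2) * (((N:ℂ)-1)*(Q*q) - (N:ℂ)*Q + q) := by
      linear_combination (-(q⁻¹ * (hr:ℂ)^2 / ((θ:ℝ):ℂ)^2)) * hg
    rw [hterm]
    have hN' : (N:ℂ) = ((hr:ℝ):ℂ)⁻¹ := by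
      have hhc0 : ((hr:ℝ):ℂ) ≠ 0 := Complex.ofReal_ne_zero.mpr hh0
      field_simp
      linear_combination hNh
    rw [show (2*(π:ℂ)*(ω:ℂ)*((hr:ℝ):ℂ))^2 = ((θ:ℝ):ℂ)^2 from by rw [hθdef]; push_cast; ring]
    rw [hN', hθZ, hzdef]
    have hhc0 : ((hr:ℝ):ℂ) ≠ 0 := Complex.ofReal_ne_zero.mpr hh0
    clear_value S Q q Z z θ hr
    field_simp
    have e1 : ((hr:ℝ):ℂ)^5 * (((hr:ℝ):ℂ)⁻¹)^5 = 1 := by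
      rw [← mul_pow, mul_inv_cancel₀ hhc0, one_pow]
    have e2 : q^2 * (q⁻¹)^2 = 1 := by rw [← mul_pow, mul_inv_cancel₀ hq0, one_pow]
    have e3 : Z^4 * (Z⁻¹)^4 = 1 := by rw [← mul_pow, mul_inv_cancel₀ hZ0, one_pow]
    have e : ((hr:ℝ):ℂ)^5 * (((hr:ℝ):ℂ)⁻¹)^5 * (q^2 * (q⁻¹)^2) * (Z^4 * (Z⁻¹)^4) = 1 := by
      rw [e1, e2, e3]; ring
    linear_combination 0 * e
  exact ⟨h1, h1.trans (integral_key _ hZ0').symm⟩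
end

section
/- For a fixed ω ≠ 0, as h → 0 the squared norm ‖ℓ̊‖² = (1/(2πω)²)·(1 − 2(1 − cos 2πωh)/(2πωh)²) admits the asymptotic expansion ‖ℓ̊‖² = h²/12 − π²ω²h⁴/90 + O(h⁶); in particular ‖ℓ̊‖² ≤ h²/12 for all h > 0. -/
open Real Filter Asymptotics

private lemma aux_nonneg (f f' : ℝ → ℝ) (hder : ∀ x, HasDerivAt f (f' x) x)
    (h0 : f 0 = 0) (hge : ∀ x, 0 ≤ x → 0 ≤ f' x) : ∀ x, 0 ≤ x → 0 ≤ f x := by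
  intro x hx
  have hmono : MonotoneOn f (Set.Ici 0) := by
    apply monotoneOn_of_deriv_nonneg (convex_Ici 0)
    · exact fun y _ => ((hder y).continuousAt).continuousWithinAt
    · exact fun y _ => ((hder y).differentiableAt).differentiableWithinAt
    · intro y hy
      rw [(hder y).deriv]
      exact hge y (le_of_lt (by simpa using hy))
  have := hmono (Set.self_mem_Ici) hx hx
  rwa [h0] at this

private lemma s3 : ∀ x : ℝ, 0 ≤ x → x - x ^ 3 / 6 ≤ Real.sin x := by
  have := aux_nonneg (fun x => Real.sin x - (x - x ^ 3 / 6))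
    (fun x => Real.cos x - (1 - x ^ 2 / 2))
    (fun x => by
      have h2 : HasDerivAt (fun y : ℝ => y - y ^ 3 / 6) (1 - x ^ 2 / 2) x := by
        have := (hasDerivAt_id x).sub ((hasDerivAt_pow 3 x).div_const 6)
        refine this.congr_deriv ?_; push_cast; ring
      exact (Real.hasDerivAt_sin x).sub h2)
    (by simp)
    (fun x _ => by have := Real.one_sub_sq_div_two_le_cos (x := x); linarith)
  intro x hx; have := this x hx; linarith

private lemma c4 : ∀ x : ℝ, Real.cos x ≤ 1 - x ^ 2 / 2 + x ^ 4 / 24 := by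
  have key := aux_nonneg (fun x => 1 - x ^ 2 / 2 + x ^ 4 / 24 - Real.cos x)
    (fun x => Real.sin x - (x - x ^ 3 / 6))
    (fun x => by
      have h2 : HasDerivAt (fun y : ℝ => 1 - y ^ 2 / 2 + y ^ 4 / 24)
          (-(x - x ^ 3 / 6)) x := by
        have := (((hasDerivAt_const x (1:ℝ)).sub ((hasDerivAt_pow 2 x).div_const 2)).add
          ((hasDerivAt_pow 4 x).div_const 24))
        refine this.congr_deriv ?_; push_cast; ring
      have := h2.sub (Real.hasDerivAt_cos x)
      refine this.congr_deriv ?_; ring)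
    (by simp)
    (fun x hx => by have := s3 x hx; linarith)
  intro x
  rcases le_total 0 x with hx | hx
  · have := key x hx; linarith
  · have := key (-x) (by linarith)
    simp only [Real.cos_neg] at this
    nlinarith [this]

private lemma s5 : ∀ x : ℝ, 0 ≤ x → Real.sin x ≤ x - x ^ 3 / 6 + x ^ 5 / 120 := by
  have := aux_nonneg (fun x => x - x ^ 3 / 6 + x ^ 5 / 120 - Real.sin x)
    (fun x => 1 - x ^ 2 / 2 + x ^ 4 / 24 - Real.cos x)
    (fun x => by
      have h2 : HasDerivAt (fun y : ℝ => y - y ^ 3 / 6 + y ^ 5 / 120)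
          (1 - x ^ 2 / 2 + x ^ 4 / 24) x := by
        have := (((hasDerivAt_id x).sub ((hasDerivAt_pow 3 x).div_const 6)).add
          ((hasDerivAt_pow 5 x).div_const 120))
        refine this.congr_deriv ?_; push_cast; ring
      exact h2.sub (Real.hasDerivAt_sin x))
    (by simp)
    (fun x _ => by have := c4 x; linarith)
  intro x hx; have := this x hx; linarith

private lemma c6 : ∀ x : ℝ, 1 - x ^ 2 / 2 + x ^ 4 / 24 - x ^ 6 / 720 ≤ Real.cos x := by
  have key := aux_nonneg
    (fun x => Real.cos x - (1 - x ^ 2 / 2 + x ^ 4 / 24 - x ^ 6 / 720))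
    (fun x => x - x ^ 3 / 6 + x ^ 5 / 120 - Real.sin x)
    (fun x => by
      have h2 : HasDerivAt (fun y : ℝ => 1 - y ^ 2 / 2 + y ^ 4 / 24 - y ^ 6 / 720)
          (-(x - x ^ 3 / 6 + x ^ 5 / 120)) x := by
        have := ((((hasDerivAt_const x (1:ℝ)).sub ((hasDerivAt_pow 2 x).div_const 2)).add
          ((hasDerivAt_pow 4 x).div_const 24)).sub ((hasDerivAt_pow 6 x).div_const 720))
        refine this.congr_deriv ?_; push_cast; ring
      have := (Real.hasDerivAt_cos x).sub h2
      refine this.congr_deriv ?_; ring)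
    (by simp)
    (fun x hx => by have := s5 x hx; linarith)
  intro x
  rcases le_total 0 x with hx | hx
  · have := key x hx; linarith
  · have := key (-x) (by linarith)
    simp only [Real.cos_neg] at this
    nlinarith [this]

private lemma s7 : ∀ x : ℝ, 0 ≤ x →
    x - x ^ 3 / 6 + x ^ 5 / 120 - x ^ 7 / 5040 ≤ Real.sin x := by
  have := aux_nonneg
    (fun x => Real.sin x - (x - x ^ 3 / 6 + x ^ 5 / 120 - x ^ 7 / 5040))
    (fun x => Real.cos x - (1 - x ^ 2 / 2 + x ^ 4 / 24 - x ^ 6 / 720))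
    (fun x => by
      have h2 : HasDerivAt (fun y : ℝ => y - y ^ 3 / 6 + y ^ 5 / 120 - y ^ 7 / 5040)
          (1 - x ^ 2 / 2 + x ^ 4 / 24 - x ^ 6 / 720) x := by
        have := ((((hasDerivAt_id x).sub ((hasDerivAt_pow 3 x).div_const 6)).add
          ((hasDerivAt_pow 5 x).div_const 120)).sub ((hasDerivAt_pow 7 x).div_const 5040))
        refine this.congr_deriv ?_; push_cast; ring
      exact (Real.hasDerivAt_sin x).sub h2)
    (by simp)
    (fun x hx => by have := c6 x; linarith)
  intro x hx; have := this x hx; linarith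

private lemma c8 : ∀ x : ℝ,
    Real.cos x ≤ 1 - x ^ 2 / 2 + x ^ 4 / 24 - x ^ 6 / 720 + x ^ 8 / 40320 := by
  have key := aux_nonneg
    (fun x => 1 - x ^ 2 / 2 + x ^ 4 / 24 - x ^ 6 / 720 + x ^ 8 / 40320 - Real.cos x)
    (fun x => Real.sin x - (x - x ^ 3 / 6 + x ^ 5 / 120 - x ^ 7 / 5040))
    (fun x => by
      have h2 : HasDerivAt
          (fun y : ℝ => 1 - y ^ 2 / 2 + y ^ 4 / 24 - y ^ 6 / 720 + y ^ 8 / 40320)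
          (-(x - x ^ 3 / 6 + x ^ 5 / 120 - x ^ 7 / 5040)) x := by
        have := (((((hasDerivAt_const x (1:ℝ)).sub ((hasDerivAt_pow 2 x).div_const 2)).add
          ((hasDerivAt_pow 4 x).div_const 24)).sub ((hasDerivAt_pow 6 x).div_const 720)).add
          ((hasDerivAt_pow 8 x).div_const 40320))
        refine this.congr_deriv ?_; push_cast; ring
      have := h2.sub (Real.hasDerivAt_cos x)
      refine this.congr_deriv ?_; ring)
    (by simp)
    (fun x hx => by have := s7 x hx; linarith)
  intro x
  rcases le_total 0 x with hx | hx
  · have := key x hx; linarith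
  · have := key (-x) (by linarith)
    simp only [Real.cos_neg] at this
    nlinarith [this]

theorem stmt7 (ω : ℝ) (hω : ω ≠ 0) :
    (fun h : ℝ =>
        (1 / (2 * π * ω) ^ 2) *
            (1 - 2 * (1 - Real.cos (2 * π * ω * h)) / (2 * π * ω * h) ^ 2)
          - (h ^ 2 / 12 - π ^ 2 * ω ^ 2 * h ^ 4 / 90))
      =O[nhdsWithin 0 (Set.Ioi 0)] (fun h : ℝ => h ^ 6) ∧
    ∀ h : ℝ, 0 < h →
      (1 / (2 * π * ω) ^ 2) *
          (1 - 2 * (1 - Real.cos (2 * π * ω * h)) / (2 * π * ω * h) ^ 2)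
        ≤ h ^ 2 / 12 := by
  have hπ : π ≠ 0 := Real.pi_ne_zero
  have ha : (2 * π * ω) ≠ 0 := by positivity
  constructor
  · apply Asymptotics.IsBigO.of_bound ((2 * π * ω) ^ 4 / 20160)
    filter_upwards [self_mem_nhdsWithin] with h hh
    have hh0 : (0:ℝ) < h := hh
    set x := 2 * π * ω * h with hxdef
    have hx : x ≠ 0 := mul_ne_zero ha hh0.ne'
    have hgl : 0 ≤ 2 * Real.cos x - 2 + x ^ 2 - x ^ 4 / 12 + x ^ 6 / 360 := by
      nlinarith [c6 x]
    have hgu : 2 * Real.cos x - 2 + x ^ 2 - x ^ 4 / 12 + x ^ 6 / 360 ≤ x ^ 8 / 20160 := by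
      nlinarith [c8 x]
    have hx2 : (0:ℝ) < (2 * π * ω) ^ 2 * x ^ 2 := by positivity
    have heq : (1 / (2 * π * ω) ^ 2) *
            (1 - 2 * (1 - Real.cos x) / x ^ 2)
          - (h ^ 2 / 12 - π ^ 2 * ω ^ 2 * h ^ 4 / 90)
        = (2 * Real.cos x - 2 + x ^ 2 - x ^ 4 / 12 + x ^ 6 / 360)
            / ((2 * π * ω) ^ 2 * x ^ 2) := by
      rw [hxdef]
      field_simp
      ring
    rw [Real.norm_eq_abs, Real.norm_eq_abs, heq,
      abs_of_nonneg (div_nonneg hgl hx2.le), abs_of_nonneg (by positivity : (0:ℝ) ≤ h ^ 6)]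
    have h1 : (2 * Real.cos x - 2 + x ^ 2 - x ^ 4 / 12 + x ^ 6 / 360)
            / ((2 * π * ω) ^ 2 * x ^ 2)
        ≤ (x ^ 8 / 20160) / ((2 * π * ω) ^ 2 * x ^ 2) :=
      (div_le_div_iff_of_pos_right hx2).mpr hgu
    have h2 : (x ^ 8 / 20160) / ((2 * π * ω) ^ 2 * x ^ 2)
        = (2 * π * ω) ^ 4 / 20160 * h ^ 6 := by
      rw [hxdef]; field_simp
    rw [h2] at h1
    exact h1
  · intro h hh
    set x := 2 * π * ω * h with hxdef
    have hx : x ≠ 0 := mul_ne_zero ha hh.ne'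
    have hx2 : (0:ℝ) < x ^ 2 := by positivity
    have h1 : (x ^ 2 - x ^ 4 / 12) / x ^ 2 ≤ 2 * (1 - Real.cos x) / x ^ 2 :=
      (div_le_div_iff_of_pos_right hx2).mpr (by nlinarith [c4 x])
    have h2 : (x ^ 2 - x ^ 4 / 12) / x ^ 2 = 1 - x ^ 2 / 12 := by field_simp
    rw [h2] at h1
    have key : 1 - 2 * (1 - Real.cos x) / x ^ 2 ≤ x ^ 2 / 12 := by linarith
    calc (1 / (2 * π * ω) ^ 2) * (1 - 2 * (1 - Real.cos x) / x ^ 2)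
        ≤ (1 / (2 * π * ω) ^ 2) * (x ^ 2 / 12) :=
          mul_le_mul_of_nonneg_left key (by positivity)
      _ = h ^ 2 / 12 := by rw [hxdef]; field_simp
end

section
/- The trapezoidal rule quadrature error functional on L_2^{(1)}[0,1] has squared norm h²/12: for every continuously differentiable function φ on [0,1], |∫_0^1 φ(x) dx − (h/2·φ(0) + h·∑_{β=1}^{N−1} φ(hβ) + h/2·φ(1))| ≤ (h/√12)·(∫_0^1 |φ'(x)|² dx)^{1/2}, where h = 1/N. -/
open MeasureTheory

lemma cs_interval {a b : ℝ} (hab : a ≤ b) {f g : ℝ → ℝ}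
    (hf : ContinuousOn f (Set.Icc a b)) (hg : ContinuousOn g (Set.Icc a b)) :
    |∫ x in a..b, f x * g x| ≤
      Real.sqrt (∫ x in a..b, f x ^ 2) * Real.sqrt (∫ x in a..b, g x ^ 2) := by
  have hmem : ∀ {φ : ℝ → ℝ}, ContinuousOn φ (Set.Icc a b) →
      MemLp φ 2 (volume.restrict (Set.Ioc a b)) := by
    intro φ hφ
    obtain ⟨C, hC⟩ := isCompact_Icc.exists_bound_of_continuousOn hφ
    exact MemLp.of_bound
      ((hφ.mono Set.Ioc_subset_Icc_self).aestronglyMeasurable measurableSet_Ioc) C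
      ((ae_restrict_iff' measurableSet_Ioc).2
        (Filter.Eventually.of_forall fun x hx => hC x (Set.Ioc_subset_Icc_self hx)))
  have hpq : (2:ℝ).HolderConjugate 2 := ⟨by norm_num, by norm_num, by norm_num⟩
  have h2 : (ENNReal.ofReal (2:ℝ)) = 2 := by
    simp [ENNReal.ofReal_ofNat]
  have key := integral_mul_norm_le_Lp_mul_Lq (μ := volume.restrict (Set.Ioc a b)) hpq
    (h2 ▸ hmem hf) (h2 ▸ hmem hg)
  rw [intervalIntegral.integral_of_le hab, intervalIntegral.integral_of_le hab,
    intervalIntegral.integral_of_le hab]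
  calc |∫ x in Set.Ioc a b, f x * g x| ≤ ∫ x in Set.Ioc a b, ‖f x‖ * ‖g x‖ :=
        (by simpa [Real.norm_eq_abs] using norm_integral_le_integral_norm (μ := volume.restrict (Set.Ioc a b)) (fun x => f x * g x))
    _ ≤ (∫ x in Set.Ioc a b, ‖f x‖ ^ (2:ℝ)) ^ ((1:ℝ)/2) *
        (∫ x in Set.Ioc a b, ‖g x‖ ^ (2:ℝ)) ^ ((1:ℝ)/2) := key
    _ = Real.sqrt (∫ x in Set.Ioc a b, f x ^ 2) * Real.sqrt (∫ x in Set.Ioc a b, g x ^ 2) := by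
        rw [Real.sqrt_eq_rpow, Real.sqrt_eq_rpow]
        congr 1 <;> congr 1 <;> refine integral_congr_ae (Filter.Eventually.of_forall fun x => ?_) <;>
          simp [Real.rpow_two, sq_abs]

lemma trap_interval {a b : ℝ} (hab : a ≤ b) {φ φ' : ℝ → ℝ}
    (hd : ∀ x ∈ Set.Icc a b, HasDerivAt φ (φ' x) x)
    (hc : ContinuousOn φ' (Set.Icc a b)) :
    |(∫ x in a..b, φ x) - (b - a)/2 * (φ a + φ b)| ≤
      Real.sqrt ((b-a)^3/12) * Real.sqrt (∫ x in a..b, φ' x ^ 2) := by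
  have huIcc : Set.uIcc a b = Set.Icc a b := Set.uIcc_of_le hab
  have hibp := intervalIntegral.integral_mul_deriv_eq_deriv_mul
    (u := fun x => x - (a+b)/2) (u' := fun _ => (1:ℝ)) (v := φ) (v' := φ')
    (fun x _ => (hasDerivAt_id x).sub_const ((a+b)/2))
    (fun x hx => hd x (huIcc ▸ hx))
    intervalIntegrable_const ((hc.mono huIcc.subset).intervalIntegrable)
  have h1 : (∫ x in a..b, φ x) - (b - a)/2 * (φ a + φ b)
      = -(∫ x in a..b, (x - (a+b)/2) * φ' x) := by
    rw [hibp]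
    simp only [one_mul]
    ring
  rw [h1, abs_neg]
  have hcs := cs_interval hab (f := fun x => x - (a+b)/2) (g := φ')
    ((continuous_id.sub continuous_const).continuousOn) hc
  have h2 : (∫ x in a..b, (x - (a+b)/2)^2) = (b-a)^3/12 := by
    rw [intervalIntegral.integral_comp_sub_right (fun x => x^2) ((a+b)/2),
      integral_pow]
    push_cast
    ring
  rw [h2] at hcs
  exact hcs

open Real

theorem stmt15 (N : ℕ) (hN : 1 ≤ N) (φ φ' : ℝ → ℝ)
    (hd : ∀ x ∈ Set.Icc (0:ℝ) 1, HasDerivAt φ (φ' x) x)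
    (hc : ContinuousOn φ' (Set.Icc (0:ℝ) 1)) :
    |(∫ x in (0:ℝ)..1, φ x)
        - ((1 / N : ℝ) / 2 * φ 0
            + (1 / N : ℝ) * ∑ β ∈ Finset.Ico 1 N, φ ((1 / N : ℝ) * β)
            + (1 / N : ℝ) / 2 * φ 1)|
      ≤ ((1 / N : ℝ) / Real.sqrt 12) * Real.sqrt (∫ x in (0:ℝ)..1, |φ' x| ^ 2) := by
  have hNpos : 0 < N := hN
  obtain ⟨M, rfl⟩ : ∃ M, N = M + 1 := ⟨N - 1, (Nat.succ_pred_eq_of_pos hNpos).symm⟩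
  have hN0 : (0:ℝ) < ((M:ℝ) + 1) := by positivity
  set h : ℝ := 1 / ((M:ℕ)+1) with hh_def
  have hh : 0 < h := by positivity
  have hhN : h * ((M:ℝ) + 1) = 1 := by
    rw [hh_def]; field_simp
  set A : ℕ → ℝ := fun k => h * k with hA_def
  have hA0 : A 0 = 0 := by simp [hA_def]
  have hAN : A (M+1) = 1 := by
    rw [hA_def]; push_cast; exact hhN
  have hmono : ∀ k : ℕ, A k ≤ A (k+1) := by
    intro k
    simp only [hA_def]
    push_cast
    nlinarith [hh.le]
  have hAd : ∀ β : ℕ, A (β+1) - A β = h := by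
    intro β
    simp only [hA_def]
    push_cast
    ring
  have hsub : ∀ β : ℕ, β + 1 ≤ M + 1 → Set.Icc (A β) (A (β+1)) ⊆ Set.Icc (0:ℝ) 1 := by
    intro β hβ
    apply Set.Icc_subset_Icc
    · simp only [hA_def]; positivity
    · have hβR : (β:ℝ) + 1 ≤ (M:ℝ) + 1 := by exact_mod_cast hβ
      have hAe : A (β+1) = h * ((β:ℝ)+1) := by rw [hA_def]; push_cast; ring
      rw [hAe, ← hhN]
      nlinarith [hh.le]
  have hφc : ContinuousOn φ (Set.Icc (0:ℝ) 1) :=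
    fun x hx => ((hd x hx).continuousAt).continuousWithinAt
  have hint : ∀ k < M + 1, IntervalIntegrable φ volume (A k) (A (k+1)) := by
    intro k hk
    exact ((hφc.mono ((Set.uIcc_of_le (hmono k)).subset.trans (hsub k hk))).intervalIntegrable)
  have hint2 : ∀ k < M + 1, IntervalIntegrable (fun x => φ' x ^ 2) volume (A k) (A (k+1)) := by
    intro k hk
    exact ((((hc.mono (hsub k hk)).pow 2).mono
      (Set.uIcc_of_le (hmono k)).subset).intervalIntegrable)
  have hsplit : ∑ β ∈ Finset.range (M+1), ∫ x in A β..A (β+1), φ x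
      = ∫ x in (0:ℝ)..1, φ x := by
    have := intervalIntegral.sum_integral_adjacent_intervals (μ := volume) (a := A) hint
    rwa [hA0, hAN] at this
  have hsplit2 : ∑ β ∈ Finset.range (M+1), ∫ x in A β..A (β+1), φ' x ^ 2
      = ∫ x in (0:ℝ)..1, φ' x ^ 2 := by
    have := intervalIntegral.sum_integral_adjacent_intervals (μ := volume) (a := A) hint2
    rwa [hA0, hAN] at this
  have hT : (h / 2 * φ 0 + h * ∑ β ∈ Finset.Ico 1 (M+1), φ (h * β) + h / 2 * φ 1)
      = ∑ β ∈ Finset.range (M+1), (A (β+1) - A β)/2 * (φ (A β) + φ (A (β+1))) := by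
    have e1 : ∀ β ∈ Finset.range (M+1),
        (A (β+1) - A β)/2 * (φ (A β) + φ (A (β+1)))
          = h/2 * φ (A β) + h/2 * φ (A (β+1)) := by
      intro β _; rw [hAd]; ring
    rw [Finset.sum_congr rfl e1, Finset.sum_add_distrib, ← Finset.mul_sum, ← Finset.mul_sum]
    rw [Finset.sum_range_succ', Finset.sum_range_succ]
    have e2 : ∑ β ∈ Finset.Ico 1 (M+1), φ (h * β) = ∑ i ∈ Finset.range M, φ (A (i+1)) := by
      rw [Finset.sum_Ico_eq_sum_range]
      refine Finset.sum_congr (by norm_num) fun i _ => ?_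
      rw [hA_def]
      congr 1
      push_cast
      ring
    rw [e2, hA0, hAN]
    ring
  rw [show ((1:ℝ) / ((M:ℕ)+1 : ℕ)) = h by rw [hh_def]; push_cast; ring]
  rw [hT, ← hsplit, ← Finset.sum_sub_distrib]
  set s : ℕ → ℝ := fun β => ∫ x in A β..A (β+1), φ' x ^ 2 with hs_def
  have hsnn : ∀ β, 0 ≤ s β := fun β =>
    intervalIntegral.integral_nonneg (hmono β) (fun x _ => sq_nonneg _)
  have hbound : ∀ β ∈ Finset.range (M+1),
      |(∫ x in A β..A (β+1), φ x) - (A (β+1) - A β)/2 * (φ (A β) + φ (A (β+1)))|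
        ≤ Real.sqrt (h^3/12) * Real.sqrt (s β) := by
    intro β hβ
    have hβ' : β + 1 ≤ M + 1 := Finset.mem_range.mp hβ
    have htr := trap_interval (hmono β)
      (fun x hx => hd x (hsub β hβ' hx)) (hc.mono (hsub β hβ'))
    rw [hAd β] at htr ⊢
    exact htr
  calc |∑ β ∈ Finset.range (M+1),
        ((∫ x in A β..A (β+1), φ x) - (A (β+1) - A β)/2 * (φ (A β) + φ (A (β+1))))|
      ≤ ∑ β ∈ Finset.range (M+1),
        |(∫ x in A β..A (β+1), φ x) - (A (β+1) - A β)/2 * (φ (A β) + φ (A (β+1)))| :=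
        Finset.abs_sum_le_sum_abs _ _
    _ ≤ ∑ β ∈ Finset.range (M+1), Real.sqrt (h^3/12) * Real.sqrt (s β) :=
        Finset.sum_le_sum hbound
    _ = Real.sqrt (h^3/12) * ∑ β ∈ Finset.range (M+1), Real.sqrt (s β) := by
        rw [Finset.mul_sum]
    _ ≤ Real.sqrt (h^3/12) * (Real.sqrt ((M:ℝ)+1) *
          Real.sqrt (∑ β ∈ Finset.range (M+1), s β)) := by
        refine mul_le_mul_of_nonneg_left ?_ (Real.sqrt_nonneg _)
        rw [← Real.sqrt_mul (by positivity)]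
        rw [Real.le_sqrt (Finset.sum_nonneg fun β _ => Real.sqrt_nonneg _)]
        calc (∑ β ∈ Finset.range (M+1), Real.sqrt (s β)) ^ 2
            ≤ (Finset.range (M+1)).card * ∑ β ∈ Finset.range (M+1), Real.sqrt (s β) ^ 2 :=
              sq_sum_le_card_mul_sum_sq
          _ = ((M:ℝ)+1) * ∑ β ∈ Finset.range (M+1), s β := by
              rw [Finset.card_range]
              push_cast
              congr 1
              exact Finset.sum_congr rfl fun β _ => Real.sq_sqrt (hsnn β)
        · exact mul_nonneg (by positivity) (Finset.sum_nonneg fun β _ => hsnn β)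
    _ = (h / Real.sqrt 12) * Real.sqrt (∫ x in (0:ℝ)..1, |φ' x| ^ 2) := by
        have e3 : ∫ x in (0:ℝ)..1, |φ' x| ^ 2 = ∫ x in (0:ℝ)..1, φ' x ^ 2 := by
          simp [sq_abs]
        rw [e3, ← hsplit2]
        have e4 : Real.sqrt (h^3/12) * Real.sqrt ((M:ℝ)+1) = h / Real.sqrt 12 := by
          rw [← Real.sqrt_mul (by positivity)]
          have : h^3/12 * ((M:ℝ)+1) = h^2/12 := by
            calc h^3/12 * ((M:ℝ)+1) = h^2 * (h * ((M:ℝ)+1))/12 := by ring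
              _ = h^2/12 := by rw [hhN]; ring
          rw [this, Real.sqrt_div (sq_nonneg h), Real.sqrt_sq hh.le]
        rw [← mul_assoc, e4]
end
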